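/- For every integer p, the element m^(2*|p|) * h(p) of K lies in the image of the polynomial ring ℤ[m, x] under the canonical embedding into its fraction field K; in particular each h(p) is a Laurent polynomial in m with coefficients in ℤ[x], i.e. h(p) ∈ ℤ[m^{±1}, x]. -/

import Mathlib

noncomputable section
open MvPolynomial

/-- `R = ℤ[m, x]`, the polynomial ring in two variables over `ℤ`. -/
abbrev Rmx : Type := MvPolynomial (Fin 2) ℤ

/-- `K`, the fraction field of `ℤ[m, x]`. -/
abbrev Kmx : Type := FractionRing Rmx

/-- The variable `m`. -/
def mK : Kmx := algebraMap Rmx Kmx (X 0)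

/-- The variable `x`. -/
def xK : Kmx := algebraMap Rmx Kmx (X 1)

/-- `a = m⁴ - x m⁴ + x² m² + m² + 1 - x`. -/
def aK : Kmx := mK ^ 4 - xK * mK ^ 4 + xK ^ 2 * mK ^ 2 + mK ^ 2 + 1 - xK

/-- `b = m⁴ - x m² + 1`. -/
def bK : Kmx := mK ^ 4 - xK * mK ^ 2 + 1

/-!
Clearing the denominator turns the recurrence into `m² h(p) = a h(p-1) - m² h(p-2)`, with
polynomial coefficients. Then `g(n) = m^(2n) h(n)` satisfies `g(n+2) = a g(n+1) - m⁴ g(n)`, so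
polynomiality propagates upwards from `g(0) = 1`, `g(1) = b`; read backwards, the same recurrence
propagates it downwards from `h(0)` and `m² h(-1) = a - b`.
-/

section Recurrence

variable {A : Type*} [CommRing A] {S : Subring A} {c d : A}

theorem pow_mul_mem_of_recurrence {v : ℕ → A} (hc : c ∈ S) (hd : d ∈ S)
    (hrec : ∀ n, d * v (n + 2) = c * v (n + 1) - d * v n) (h0 : v 0 ∈ S) (h1 : d * v 1 ∈ S) :
    ∀ n, d ^ n * v n ∈ S
  | 0 => by simpa using h0
  | 1 => by simpa using h1
  | n + 2 => by
    have step : d ^ (n + 2) * v (n + 2) = c * (d ^ (n + 1) * v (n + 1)) - d ^ 2 * (d ^ n * v n) := by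
      linear_combination d ^ (n + 1) * hrec n
    rw [step]
    exact sub_mem (mul_mem hc (pow_mul_mem_of_recurrence hc hd hrec h0 h1 (n + 1)))
      (mul_mem (pow_mem hd 2) (pow_mul_mem_of_recurrence hc hd hrec h0 h1 n))

theorem pow_natAbs_mul_mem_of_recurrence {u : ℤ → A} (hc : c ∈ S) (hd : d ∈ S)
    (hrec : ∀ p, d * u p = c * u (p - 1) - d * u (p - 2)) (h0 : u 0 ∈ S) (h1 : d * u 1 ∈ S)
    (p : ℤ) : d ^ p.natAbs * u p ∈ S := by
  have forward : ∀ n : ℕ, d ^ n * u n ∈ S := by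
    refine pow_mul_mem_of_recurrence hc hd (fun n => ?_) h0 (by simpa using h1)
    have := hrec (n + 2)
    push_cast
    rwa [add_sub_cancel_right, show (n : ℤ) + 2 - 1 = n + 1 by ring] at this
  have backward : ∀ n : ℕ, d ^ n * u (-n) ∈ S := by
    have hm1 : d * u (-1) = c * u 0 - d * u 1 := by
      have := hrec 1
      norm_num at this
      linear_combination this
    refine pow_mul_mem_of_recurrence hc hd (fun n => ?_) (by simpa using h0) ?_
    · have := hrec (-n)
      push_cast
      rw [show -(n : ℤ) - 1 = -(n + 1) by ring, show -(n : ℤ) - 2 = -(n + 2) by ring] at this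
      linear_combination this
    · simpa [hm1] using sub_mem (mul_mem hc h0) h1
  obtain ⟨n, rfl | rfl⟩ := Int.eq_nat_or_neg p
  · simpa using forward n
  · simpa using backward n

end Recurrence

theorem mK_ne_zero : mK ≠ 0 :=
  (map_ne_zero_iff _ (IsFractionRing.injective Rmx Kmx)).mpr (X_ne_zero 0)

theorem mK_mem_range : mK ∈ (algebraMap Rmx Kmx).range := ⟨X 0, rfl⟩

theorem aK_mem_range : aK ∈ (algebraMap Rmx Kmx).range :=
  ⟨X 0 ^ 4 - X 1 * X 0 ^ 4 + X 1 ^ 2 * X 0 ^ 2 + X 0 ^ 2 + 1 - X 1, by simp [aK, mK, xK]⟩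

theorem bK_mem_range : bK ∈ (algebraMap Rmx Kmx).range :=
  ⟨X 0 ^ 4 - X 1 * X 0 ^ 2 + 1, by simp [bK, mK, xK]⟩

/-- The claim in Theorem 2.2 that `h_p(m, x) ∈ ℤ[m^{±1}, x]`: for every integer `p`,
`m^(2|p|) h(p)` lies in the image of `ℤ[m, x]` in its fraction field. -/
theorem stmt_15 (h : ℤ → Kmx) (h0 : h 0 = 1) (h1 : h 1 = bK / mK ^ 2)
    (hrec : ∀ p : ℤ, h p = (aK / mK ^ 2) * h (p - 1) - h (p - 2)) :
    ∀ p : ℤ, mK ^ (2 * |p|) * h p ∈ Set.range (algebraMap Rmx Kmx) := by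
  intro p
  have hpow : mK ^ (2 * |p|) = (mK ^ 2) ^ p.natAbs := by
    rw [zpow_mul, Int.abs_eq_natAbs, zpow_natCast, zpow_ofNat]
  rw [hpow, ← RingHom.coe_range]
  refine pow_natAbs_mul_mem_of_recurrence aK_mem_range (pow_mem mK_mem_range 2)
    (fun q => ?_) (h0 ▸ one_mem _) ?_ p
  · rw [hrec q, mul_sub, ← mul_assoc, mul_div_cancel₀ _ (pow_ne_zero 2 mK_ne_zero)]
  · rw [h1, mul_div_cancel₀ _ (pow_ne_zero 2 mK_ne_zero)]
    exact bK_mem_range
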